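/- Let T₁, T₂ be effects on a complex Hilbert space H. If λ(T₁, P_φ) = λ(T₂, P_φ) for every unit vector φ ∈ H (where λ(T, P_φ) = sup { t ∈ [0,1] : t·P_φ ≤ T }), then T₁ = T₂. -/

import Mathlib

/-!
Fix `ψ`, put `v = T₁ ψ` and `r = re ⟪T₁ ψ, ψ⟫ > 0`. Cauchy–Schwarz for the positive form
`⟪T₁ ·, ·⟫` reads `‖⟪v, x⟫‖² ≤ r ⟪T₁ x, x⟫`, i.e. `(‖v‖² / r) P_v ≤ T₁`, and `T₁ ≤ 1` gives
`‖v‖² ≤ r`. So `‖v‖² / r` is at most the strength of `T₁`, hence of `T₂`, along `P_v`; as the set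
defining the strength is closed, `(‖v‖² / r) P_v ≤ T₂`. Testing this at `ψ` gives
`r² ≤ ‖⟪v, ψ⟫‖² ≤ r ⟪T₂ ψ, ψ⟫`, so `T₁ ≤ T₂`, and equality follows by symmetry.
-/

open scoped InnerProductSpace

variable {H : Type*} [NormedAddCommGroup H] [InnerProductSpace ℂ H] [CompleteSpace H]

/-- The trace of `A` is one: in every Hilbert basis, the diagonal sums to `1`. -/
def HasTraceOne (A : H →L[ℂ] H) : Prop :=
  ∀ (w : Set H) (b : HilbertBasis w ℂ H),
    HasSum (fun i => RCLike.re (⟪(b i : H), A (b i)⟫_ℂ)) 1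

/-- A state: a positive (trace-class) operator of trace one. -/
def IsState (A : H →L[ℂ] H) : Prop := A.IsPositive ∧ HasTraceOne A

/-- A rank-one orthogonal projection (pure state). -/
def IsRankOneProjection (P : H →L[ℂ] H) : Prop :=
  IsIdempotentElem P ∧ IsSelfAdjoint P ∧ Module.finrank ℂ (LinearMap.range (P : H →ₗ[ℂ] H)) = 1

/-- The strength of the effect `T` along `P`: `sup { t ∈ [0,1] : t • P ≤ T }`. -/
noncomputable def strength (T P : H →L[ℂ] H) : ℝ :=
  sSup {t : ℝ | t ∈ Set.Icc (0:ℝ) 1 ∧ t • P ≤ T}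

/-- The positive square root of a positive operator. -/
noncomputable def opSqrt (A : H →L[ℂ] H) : H →L[ℂ] H := CFC.sqrt A

open ContinuousLinearMap RCLike Submodule

lemma le_iff_forall_re_inner_le {A B : H →L[ℂ] H} (hA : IsSelfAdjoint A) (hB : IsSelfAdjoint B) :
    A ≤ B ↔ ∀ x, re ⟪A x, x⟫_ℂ ≤ re ⟪B x, x⟫_ℂ := by
  simp only [le_def, isPositive_def', hB.sub hA, true_and, reApplyInnerSelf_apply, sub_apply,
    inner_sub_left, map_sub, sub_nonneg]

lemma inner_apply_eq_inner_sqrt_apply {T : H →L[ℂ] H} (hT : 0 ≤ T) (x y : H) :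
    ⟪T x, y⟫_ℂ = ⟪CFC.sqrt T x, CFC.sqrt T y⟫_ℂ := by
  have hS : IsSelfAdjoint (CFC.sqrt T) := .of_nonneg (CFC.sqrt_nonneg T)
  conv_lhs => rw [← CFC.sqrt_mul_sqrt_self T]
  rw [mul_apply_eq_comp, ← adjoint_inner_right, ← star_eq_adjoint, hS.star_eq]

lemma norm_inner_apply_sq_le {T : H →L[ℂ] H} (hT : 0 ≤ T) (x y : H) :
    ‖⟪T x, y⟫_ℂ‖ ^ 2 ≤ re ⟪T x, x⟫_ℂ * re ⟪T y, y⟫_ℂ := by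
  simp only [inner_apply_eq_inner_sqrt_apply hT, inner_self_eq_norm_sq, ← mul_pow]
  gcongr
  exact norm_inner_le_norm _ _

lemma norm_apply_sq_le_re_inner {T : H →L[ℂ] H} (hT₀ : 0 ≤ T) (hT₁ : T ≤ 1) (x : H) :
    ‖T x‖ ^ 2 ≤ re ⟪T x, x⟫_ℂ := by
  -- `‖T x‖⁴ = ⟪T x, T x⟫² ≤ ⟪T x, x⟫ ⟪T (T x), T x⟫ ≤ ⟪T x, x⟫ ‖T x‖²`
  have hle := (le_iff_forall_re_inner_le (.of_nonneg hT₀) (.one _)).mp hT₁ (T x)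
  have hcs := norm_inner_apply_sq_le hT₀ x (T x)
  rw [one_apply_eq_self, inner_self_eq_norm_sq] at hle
  rw [inner_self_eq_norm_sq_to_K, norm_pow, norm_ofReal, abs_norm] at hcs
  have hr₀ := (nonneg_iff_isPositive T).mp hT₀ |>.re_inner_nonneg_left x
  nlinarith [mul_le_mul_of_nonneg_left hle hr₀]

lemma le_strength {E : Type*} [NormedAddCommGroup E] [InnerProductSpace ℂ E] {T P : E →L[ℂ] E}
    {t : ℝ} (ht : t ∈ Set.Icc (0 : ℝ) 1) (h : t • P ≤ T) : t ≤ strength T P :=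
  le_csSup ⟨1, fun _ hs ↦ hs.1.2⟩ ⟨ht, h⟩

lemma smul_le_of_le_strength {T P : H →L[ℂ] H} (hT : 0 ≤ T) (hP : 0 ≤ P) {t : ℝ}
    (h : t ≤ strength T P) : t • P ≤ T := by
  have hS : IsClosed (Set.Icc (0 : ℝ) 1 ∩ {t : ℝ | t • P ≤ T}) :=
    isClosed_Icc.inter (isClosed_le (continuous_id.smul continuous_const) continuous_const)
  have hmem : strength T P ∈ Set.Icc (0 : ℝ) 1 ∩ {t : ℝ | t • P ≤ T} :=
    hS.csSup_mem ⟨0, ⟨le_rfl, zero_le_one⟩, by simpa using hT⟩ ⟨1, fun _ hs ↦ hs.1.2⟩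
  calc t • P ≤ strength T P • P := smul_le_smul_of_nonneg_right h hP
    _ ≤ T := hmem.2

lemma re_inner_starProjection_span_singleton {𝕜 E : Type*} [RCLike 𝕜] [NormedAddCommGroup E]
    [InnerProductSpace 𝕜 E] (v x : E) :
    re ⟪(𝕜 ∙ v).starProjection x, x⟫_𝕜 = ‖⟪v, x⟫_𝕜‖ ^ 2 / ‖v‖ ^ 2 := by
  rw [starProjection_singleton, inner_smul_left, map_div₀, conj_ofReal, div_mul_eq_mul_div,
    RCLike.conj_mul, ← ofReal_pow, ← ofReal_div, ofReal_re]

lemma smul_starProjection_span_singleton_le_iff {T : H →L[ℂ] H} (hT : IsSelfAdjoint T) {v : H}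
    (hv : v ≠ 0) {r : ℝ} (hr : 0 < r) :
    (‖v‖ ^ 2 / r) • (ℂ ∙ v).starProjection ≤ T ↔ ∀ x, ‖⟪v, x⟫_ℂ‖ ^ 2 ≤ r * re ⟪T x, x⟫_ℂ := by
  rw [le_iff_forall_re_inner_le ((IsSelfAdjoint.all _).smul (isSelfAdjoint_starProjection _)) hT]
  refine forall_congr' fun x ↦ ?_
  have hscale : ‖v‖ ^ 2 / r * (‖⟪v, x⟫_ℂ‖ ^ 2 / ‖v‖ ^ 2) = ‖⟪v, x⟫_ℂ‖ ^ 2 / r := by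
    field_simp [norm_ne_zero_iff.mpr hv]
  rw [smul_apply, inner_smul_left_eq_smul, smul_re, re_inner_starProjection_span_singleton, hscale,
    div_le_iff₀ hr, mul_comm]

lemma isRankOneProjection_starProjection_span_singleton {v : H} (hv : v ≠ 0) :
    IsRankOneProjection (ℂ ∙ v).starProjection :=
  ⟨isIdempotentElem_starProjection _, isSelfAdjoint_starProjection _, by
    rw [range_starProjection]; exact finrank_span_singleton hv⟩

lemma le_of_forall_strength_le {T₁ T₂ : H →L[ℂ] H} (hT₁₀ : 0 ≤ T₁) (hT₁₁ : T₁ ≤ 1) (hT₂₀ : 0 ≤ T₂)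
    (h : ∀ v : H, v ≠ 0 →
      strength T₁ (ℂ ∙ v).starProjection ≤ strength T₂ (ℂ ∙ v).starProjection) :
    T₁ ≤ T₂ := by
  rw [le_iff_forall_re_inner_le (.of_nonneg hT₁₀) (.of_nonneg hT₂₀)]
  intro ψ
  set v := T₁ ψ
  set r := re ⟪v, ψ⟫_ℂ
  rcases le_or_gt r 0 with hr | hr
  · exact hr.trans ((nonneg_iff_isPositive T₂).mp hT₂₀ |>.re_inner_nonneg_left ψ)
  have hv : v ≠ 0 := fun hv ↦ by simp [r, hv] at hr
  have ht : ‖v‖ ^ 2 / r ∈ Set.Icc (0 : ℝ) 1 :=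
    ⟨by positivity, (div_le_one hr).mpr (norm_apply_sq_le_re_inner hT₁₀ hT₁₁ ψ)⟩
  have hle₁ : (‖v‖ ^ 2 / r) • (ℂ ∙ v).starProjection ≤ T₁ :=
    (smul_starProjection_span_singleton_le_iff (.of_nonneg hT₁₀) hv hr).mpr
      (norm_inner_apply_sq_le hT₁₀ ψ)
  have hle₂ : (‖v‖ ^ 2 / r) • (ℂ ∙ v).starProjection ≤ T₂ :=
    smul_le_of_le_strength hT₂₀ isStarProjection_starProjection.nonneg
      ((le_strength ht hle₁).trans (h v hv))
  have hψ := (smul_starProjection_span_singleton_le_iff (.of_nonneg hT₂₀) hv hr).mp hle₂ ψ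
  nlinarith [re_le_norm ⟪v, ψ⟫_ℂ]

theorem effect_eq_of_strength_eq (T₁ T₂ : H →L[ℂ] H)
    (hT₁0 : (0 : H →L[ℂ] H) ≤ T₁) (hT₁1 : T₁ ≤ 1)
    (hT₂0 : (0 : H →L[ℂ] H) ≤ T₂) (hT₂1 : T₂ ≤ 1)
    (h : ∀ φ : H, ‖φ‖ = 1 → ∀ P : H →L[ℂ] H, IsRankOneProjection P →
      LinearMap.range (P : H →ₗ[ℂ] H) = Submodule.span ℂ {φ} → strength T₁ P = strength T₂ P) :
    T₁ = T₂ := by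
  have h' : ∀ v : H, v ≠ 0 →
      strength T₁ (ℂ ∙ v).starProjection = strength T₂ (ℂ ∙ v).starProjection := fun v hv ↦ by
    refine h ((‖v‖⁻¹ : ℂ) • v) (norm_smul_inv_norm hv) _
      (isRankOneProjection_starProjection_span_singleton hv) ?_
    rw [range_starProjection, span_singleton_smul_eq (by simpa using hv)]
  exact le_antisymm (le_of_forall_strength_le hT₁0 hT₁1 hT₂0 fun v hv ↦ (h' v hv).le)
    (le_of_forall_strength_le hT₂0 hT₂1 hT₁0 fun v hv ↦ (h' v hv).ge)
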